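/- Let n ≥ t and let x_1, x_2, ..., x_{2^n - 1} be a sequence of t-bit values (elements of {0,1}^t) such that every nonzero value appears exactly 2^{n-t} times and the value 0 appears exactly 2^{n-t} - 1 times. Then for every fixed bit position k, the periodic sequence of the k-th bits of the x_i (extended periodically with period 2^n - 1) has minimal period exactly 2^n - 1. -/
import Mathlib


/-- If a periodic (period `2^n - 1`) sequence of `t`-bit values
(`t ≤ n`) takes every nonzero value exactly `2^(n-t)` times and the zero value
exactly `2^(n-t) - 1` times over one period, then for every bit position `k`
the sequence of `k`-th bits has minimal period exactly `2^n - 1`. -/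
theorem stmt0 (n t : ℕ) (htn : t ≤ n)
    (x : ℕ → (Fin t → Bool))
    (hper : ∀ i, x (i + (2 ^ n - 1)) = x i)
    (hcount : ∀ v : Fin t → Bool, v ≠ (fun _ => false) →
      ((Finset.range (2 ^ n - 1)).filter (fun i => x i = v)).card = 2 ^ (n - t))
    (hzero : ((Finset.range (2 ^ n - 1)).filter
        (fun i => x i = fun _ => false)).card = 2 ^ (n - t) - 1)
    (k : Fin t) (p : ℕ) (hp : 0 < p) (hpd : p ∣ 2 ^ n - 1)
    (hpper : ∀ i, x (i + p) k = x i k) :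
    p = 2 ^ n - 1 := by
  have ht : 1 ≤ t := k.pos
  have hn : 1 ≤ n := le_trans ht htn
  set N := 2 ^ n - 1 with hN
  obtain ⟨m, hm⟩ := hpd
  -- the set of values with k-th bit true
  set S : Finset (Fin t → Bool) :=
    Finset.univ.filter (fun v => v k = true) with hS
  -- card S = 2^(t-1)
  have hScard : S.card = 2 ^ (t - 1) := by
    have hupd : ∀ (v : Fin t → Bool) (b : Bool), v k = b →
        Function.update (Function.update v k (!b)) k b = v := by
      intro v b h
      rw [Function.update_idem, ← h, Function.update_eq_self]
    have hbij : S.card = (Finset.univ.filter (fun v : Fin t → Bool => ¬ v k = true)).card := by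
      apply Finset.card_bij' (fun v _ => Function.update v k false)
        (fun v _ => Function.update v k true)
      case hi => intro v hv; simp [Finset.mem_filter]
      case hj => intro v hv; simp [hS, Finset.mem_filter]
      case left_inv =>
        intro v hv
        simp only [hS, Finset.mem_filter] at hv
        exact hupd v true hv.2
      case right_inv =>
        intro v hv
        simp only [Finset.mem_filter, Bool.not_eq_true] at hv
        exact hupd v false hv.2
    have htot := Finset.card_filter_add_card_filter_not
      (s := (Finset.univ : Finset (Fin t → Bool))) (fun v => v k = true)
    rw [← hS, ← hbij] at htot
    have hcu : (Finset.univ : Finset (Fin t → Bool)).card = 2 ^ t := by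
      simp [Fintype.card_fun]
    rw [hcu] at htot
    have : 2 ^ t = 2 ^ (t - 1) * 2 := by
      rw [← pow_succ]
      congr 1
      clear hbij hupd
      omega
    clear hbij hupd
    omega
  -- count of true bits over one full period
  have htrue : ((Finset.range N).filter (fun i => x i k = true)).card = 2 ^ (n - 1) := by
    have hsplit : (Finset.range N).filter (fun i => x i k = true) =
        S.biUnion (fun v => (Finset.range N).filter (fun i => x i = v)) := by
      ext i
      simp only [Finset.mem_biUnion, Finset.mem_filter, hS, Finset.mem_univ, true_and]
      constructor
      · rintro ⟨hi, hb⟩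
        exact ⟨x i, hb, hi, rfl⟩
      · rintro ⟨v, hv, hi, he⟩
        exact ⟨hi, he ▸ hv⟩
    rw [hsplit, Finset.card_biUnion]
    · have : ∀ v ∈ S, ((Finset.range N).filter (fun i => x i = v)).card = 2 ^ (n - t) := by
        intro v hv
        apply hcount
        intro h
        simp [hS, h] at hv
      rw [Finset.sum_congr rfl this, Finset.sum_const, smul_eq_mul, hScard, ← pow_add]
      congr 1
      omega
    · intro a _ b _ hab
      simp only [Finset.disjoint_left, Finset.mem_filter]
      rintro i ⟨_, ha⟩ ⟨_, hb⟩
      exact hab (ha ▸ hb ▸ rfl)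
  -- periodicity of bit sequence extended to multiples
  have hmulper : ∀ q i, x (i + q * p) k = x i k := by
    intro q
    induction q with
    | zero => simp
    | succ q ih =>
      intro i
      have : i + (q + 1) * p = (i + q * p) + p := by ring
      rw [this, hpper, ih]
  -- count over range (p * m) equals m * count over range p
  set c := ((Finset.range p).filter (fun i => x i k = true)).card with hc
  have hcnt : ∀ M, ((Finset.range (p * M)).filter (fun i => x i k = true)).card = M * c := by
    intro M
    induction M with
    | zero => simp
    | succ M ih =>
      have h1 : p * (M + 1) = p * M + p := by ring
      rw [h1]
      rw [Finset.card_filter] at ih ⊢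
      rw [Finset.sum_range_add, ih]
      have : ∀ j, (if x (p * M + j) k = true then 1 else 0) =
          (if x j k = true then 1 else 0) := by
        intro j
        have := hmulper M j
        rw [mul_comm] at this
        rw [Nat.add_comm, this]
      rw [Finset.sum_congr rfl (fun j _ => this j), ← Finset.card_filter, ← hc]
      ring
  have hkey : m * c = 2 ^ (n - 1) := by
    rw [← hcnt m, ← hm, htrue]
  -- m is odd and divides 2^(n-1), hence m = 1
  have hNpos : 0 < N := by
    have : 2 ^ 1 ≤ 2 ^ n := Nat.pow_le_pow_right (by norm_num) hn
    omega
  have hNodd : Odd N := by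
    have h2 : 2 ∣ 2 ^ n := dvd_pow_self 2 (by omega)
    rcases h2 with ⟨w, hw⟩
    refine ⟨w - 1, ?_⟩
    omega
  have hmodd : Odd m := hNodd.of_dvd_nat ⟨p, by rw [hm]; ring⟩
  have hm1 : m = 1 := by
    have hdvd : m ∣ 2 ^ (n - 1) := ⟨c, hkey.symm⟩
    have hcop : Nat.Coprime m 2 := Nat.coprime_two_right.mpr hmodd
    exact (hcop.pow_right (n - 1)).eq_one_of_dvd hdvd
  rw [hm1, mul_one] at hm
  exact hm.symm.trans hN
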